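/- The Kostka number K_{λ,μ} is positive if and only if λ dominates μ, i.e. λ₁+⋯+λ_i ≥ μ₁+⋯+μ_i for all i. -/

import Mathlib

/-!
In a semistandard tableau the entries of row `i` are at least `i`, so the entries smaller than `N`
fill at most the first `N` rows; this is dominance. Conversely, the cells holding the largest
entry `n` of a tableau form a horizontal strip, and removing a suitable horizontal strip of
`μ_n` cells from `λ` preserves dominance over `μ` with its last row deleted. Induction on the
number of rows of `μ` then builds the tableau strip by strip.
-/

open Finset

/-- The Kostka number `K_{λ,μ}`: the number of semistandard Young tableaux of shape `λ`
whose content is `μ`, i.e. having exactly `μ_k` entries equal to `k` for every `k`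
(entries are indexed starting from `0`, and `μ_k = μ.rowLen k` is the `k`-th part). -/
noncomputable def kostka (lam mu : YoungDiagram) : ℕ :=
  Nat.card {T : SemistandardYoungTableau lam //
    ∀ k : ℕ, (lam.cells.filter (fun c => T.entry c.1 c.2 = k)).card = mu.rowLen k}

theorem Antitone.sum_range_ite_lt_add_le {m : ℕ → ℕ} (hm : Antitone m) (n N : ℕ) :
    ∑ k ∈ range N, (if k < n then m k else 0) + m n ≤ ∑ k ∈ range (N + 1), m k := by
  rw [← sum_filter, show {k ∈ range N | k < n} = range (min N n) by ext; simp]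
  rcases le_total N n with h | h
  · rw [min_eq_left h, sum_range_succ]
    exact Nat.add_le_add_left (hm h) _
  · rw [min_eq_right h, ← sum_range_succ]
    exact sum_le_sum_of_subset (range_subset_range.2 (by omega))

namespace YoungDiagram

theorem rowLen_eq_of_forall_mem_iff {μ : YoungDiagram} {i n : ℕ}
    (h : ∀ j, (i, j) ∈ μ ↔ j < n) : μ.rowLen i = n :=
  le_antisymm (not_lt.1 fun hn => lt_irrefl n ((h n).1 (mem_iff_lt_rowLen.2 hn)))
    (not_lt.1 fun hn => lt_irrefl _ (mem_iff_lt_rowLen.1 ((h _).2 hn)))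

theorem rowLen_eq_zero_of_colLen_le {μ : YoungDiagram} {i : ℕ} (h : μ.colLen 0 ≤ i) :
    μ.rowLen i = 0 :=
  Nat.eq_zero_of_not_pos fun hpos => (mem_iff_lt_colLen.1 (mem_iff_lt_rowLen.2 hpos)).not_ge h

theorem card_filter_fst_lt (μ : YoungDiagram) (N : ℕ) :
    #{c ∈ μ.cells | c.1 < N} = ∑ i ∈ range N, μ.rowLen i := by
  simp only [rowLen_eq_card, row, sum_card_fiberwise_eq_card_filter, mem_range]

theorem card_eq_sum_rowLen {μ : YoungDiagram} {N : ℕ} (hN : μ.rowLen N = 0) :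
    μ.card = ∑ i ∈ range N, μ.rowLen i := by
  rw [← card_filter_fst_lt, filter_true_of_mem]
  rintro ⟨i, j⟩ hc
  have := μ.rowLen_anti N i
  rw [mem_cells, mem_iff_lt_rowLen] at hc
  omega

/-- Removes from row `i` its last `min (μ.rowLen i) c - min (μ.rowLen (i + 1)) c` cells: one for
each of the first `c` columns whose bottom cell lies in row `i`. For `c ≤ μ.rowLen 0` this is a
horizontal strip of `c` cells. -/
def removeStrip (μ : YoungDiagram) (c : ℕ) : YoungDiagram where
  cells := {x ∈ μ.cells | x.2 < μ.rowLen (x.1 + 1) + (μ.rowLen x.1 - c)}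
  isLowerSet := by
    rintro ⟨i, j⟩ ⟨i', j'⟩ ⟨hi, hj⟩ hx
    simp only [coe_filter, Set.mem_ofPred_eq, mem_cells] at hx ⊢
    have : μ.rowLen i ≤ μ.rowLen i' := μ.rowLen_anti _ _ hi
    have : μ.rowLen (i + 1) ≤ μ.rowLen (i' + 1) := μ.rowLen_anti _ _ (Nat.succ_le_succ hi)
    exact ⟨μ.up_left_mem hi hj hx.1, by omega⟩

variable {μ : YoungDiagram} {c : ℕ}

theorem mem_removeStrip {x : ℕ × ℕ} :
    x ∈ μ.removeStrip c ↔ x ∈ μ ∧ x.2 < μ.rowLen (x.1 + 1) + (μ.rowLen x.1 - c) :=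
  mem_filter

theorem removeStrip_le (μ : YoungDiagram) (c : ℕ) : μ.removeStrip c ≤ μ :=
  fun _ hx => (mem_removeStrip.1 hx).1

theorem mem_removeStrip_of_succ_mem {i j : ℕ} (h : (i + 1, j) ∈ μ) : (i, j) ∈ μ.removeStrip c :=
  mem_removeStrip.2 ⟨μ.up_left_mem i.le_succ le_rfl h,
    (mem_iff_lt_rowLen.1 h).trans_le (Nat.le_add_right _ _)⟩

theorem rowLen_removeStrip (i : ℕ) :
    (μ.removeStrip c).rowLen i = min (μ.rowLen i) (μ.rowLen (i + 1) + (μ.rowLen i - c)) :=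
  rowLen_eq_of_forall_mem_iff fun j => by rw [mem_removeStrip, mem_iff_lt_rowLen, lt_min_iff]

theorem sum_rowLen_removeStrip_add (hc : c ≤ μ.rowLen 0) (N : ℕ) :
    ∑ i ∈ range N, (μ.removeStrip c).rowLen i + (c - μ.rowLen N) = ∑ i ∈ range N, μ.rowLen i := by
  induction N with
  | zero => simpa using Nat.sub_eq_zero_of_le hc
  | succ N ih =>
    rw [sum_range_succ, sum_range_succ, rowLen_removeStrip, ← ih]
    have := μ.rowLen_anti N (N + 1) N.le_succ
    omega

theorem card_removeStrip_add (hc : c ≤ μ.rowLen 0) : (μ.removeStrip c).card + c = μ.card := by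
  have hN := rowLen_eq_zero_of_colLen_le (μ := μ) le_rfl
  have hN' : (μ.removeStrip c).rowLen (μ.colLen 0) = 0 := by simp [rowLen_removeStrip, hN]
  simpa [hN, ← card_eq_sum_rowLen hN, ← card_eq_sum_rowLen hN'] using
    sum_rowLen_removeStrip_add hc (μ.colLen 0)

theorem le_sum_rowLen_removeStrip (hc : c ≤ μ.rowLen 0) {a N : ℕ}
    (h : a ≤ ∑ i ∈ range N, μ.rowLen i) (hsucc : a + c ≤ ∑ i ∈ range (N + 1), μ.rowLen i) :
    a ≤ ∑ i ∈ range N, (μ.removeStrip c).rowLen i := by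
  have := sum_rowLen_removeStrip_add hc N
  rw [sum_range_succ] at hsucc
  omega

end YoungDiagram

namespace SemistandardYoungTableau

open YoungDiagram

variable {μ : YoungDiagram}

def content (T : SemistandardYoungTableau μ) (k : ℕ) : ℕ :=
  #{c ∈ μ.cells | T.entry c.1 c.2 = k}

theorem sum_range_content (T : SemistandardYoungTableau μ) (N : ℕ) :
    ∑ k ∈ range N, T.content k = #{c ∈ μ.cells | T c.1 c.2 < N} := by
  simp only [content, sum_card_fiberwise_eq_card_filter, mem_range, to_fun_eq_coe]

theorem row_le_entry (T : SemistandardYoungTableau μ) {i j : ℕ} (h : (i, j) ∈ μ) : i ≤ T i j := by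
  induction i with
  | zero => exact Nat.zero_le _
  | succ i ih =>
    exact (ih (μ.up_left_mem i.le_succ le_rfl h)).trans_lt (T.col_strict i.lt_succ_self h)

theorem sum_range_content_le (T : SemistandardYoungTableau μ) (N : ℕ) :
    ∑ k ∈ range N, T.content k ≤ ∑ i ∈ range N, μ.rowLen i := by
  rw [sum_range_content, ← card_filter_fst_lt]
  refine card_le_card fun c hc => ?_
  rw [mem_filter] at hc ⊢
  exact ⟨hc.1, (T.row_le_entry ((mem_cells _).1 hc.1)).trans_lt hc.2⟩

theorem content_pos (T : SemistandardYoungTableau μ) {i j : ℕ} (h : (i, j) ∈ μ) :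
    0 < T.content (T i j) :=
  card_pos.2 ⟨(i, j), mem_filter.2 ⟨(mem_cells _).2 h, rfl⟩⟩

theorem finite_setOf_entry_lt (μ : YoungDiagram) (n : ℕ) :
    {T : SemistandardYoungTableau μ | ∀ i j, (i, j) ∈ μ → T i j < n}.Finite := by
  refine Set.Finite.of_finite_image (f := fun T (c : μ.cells) => T c.1.1 c.1.2)
    ((Set.Finite.pi (t := fun _ => Set.Iio n) fun _ => Set.finite_Iio n).subset ?_) ?_
  · rintro _ ⟨T, hT, rfl⟩ c -
    exact hT _ _ ((mem_cells _).1 c.2)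
  · intro T _ T' _ h
    ext i j
    by_cases hij : (i, j) ∈ μ
    · exact congrFun h ⟨(i, j), (mem_cells _).2 hij⟩
    · rw [T.zeros hij, T'.zeros hij]

theorem entry_lt_of_content_eq_zero (T : SemistandardYoungTableau μ) {n : ℕ}
    (hT : ∀ k, n ≤ k → T.content k = 0) {i j : ℕ} (h : (i, j) ∈ μ) : T i j < n :=
  not_le.1 fun hn => (T.content_pos h).ne' (hT _ hn)

theorem finite_setOf_content_eq_rowLen (μ ν : YoungDiagram) :
    {T : SemistandardYoungTableau μ | ∀ k, T.content k = ν.rowLen k}.Finite :=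
  (finite_setOf_entry_lt μ (ν.colLen 0)).subset fun T hT _ _ =>
    T.entry_lt_of_content_eq_zero fun k hk => (hT k).trans (rowLen_eq_zero_of_colLen_le hk)

section extendStrip

variable {ν : YoungDiagram} (T : SemistandardYoungTableau ν) (hle : ν ≤ μ)
  (hstrip : ∀ i j, (i + 1, j) ∈ μ → (i, j) ∈ ν) (n : ℕ) (hT : ∀ i j, (i, j) ∈ ν → T i j < n)

/-- `hstrip` says that the cells of `μ` outside `ν` form a horizontal strip. -/
def extendStrip : SemistandardYoungTableau μ where
  entry i j := if (i, j) ∈ ν then T i j else if (i, j) ∈ μ then n else 0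
  row_weak' {i j1 j2} hj hcell := by
    by_cases h2 : (i, j2) ∈ ν
    · rw [if_pos h2, if_pos (ν.up_left_mem le_rfl hj.le h2)]
      exact T.row_weak hj h2
    · rw [if_neg h2, if_pos hcell]
      split_ifs with h1
      · exact (hT _ _ h1).le
      · exact le_rfl
      · exact Nat.zero_le n
  col_strict' {i1 i2 j} hi hcell := by
    have h1 : (i1, j) ∈ ν := hstrip i1 j (μ.up_left_mem hi le_rfl hcell)
    by_cases h2 : (i2, j) ∈ ν
    · rw [if_pos h1, if_pos h2]
      exact T.col_strict hi h2
    · rw [if_pos h1, if_neg h2, if_pos hcell]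
      exact hT _ _ h1
  zeros' hcell := by rw [if_neg fun h => hcell (hle h), if_neg hcell]

theorem content_extendStrip (k : ℕ) :
    (T.extendStrip hle hstrip n hT).content k = if k = n then μ.card - ν.card else T.content k := by
  have hsub : ν.cells ⊆ μ.cells := cells_subset_iff.2 hle
  rw [content, ← union_sdiff_of_subset hsub, filter_union,
    card_union_of_disjoint (disjoint_filter_filter disjoint_sdiff)]
  have hin : {c ∈ ν.cells | (T.extendStrip hle hstrip n hT).entry c.1 c.2 = k} =
      {c ∈ ν.cells | T.entry c.1 c.2 = k} :=
    filter_congr fun c hc => by simp only [extendStrip, if_pos ((mem_cells c).1 hc)]; rfl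
  have hout : {c ∈ μ.cells \ ν.cells | (T.extendStrip hle hstrip n hT).entry c.1 c.2 = k} =
      {c ∈ μ.cells \ ν.cells | n = k} :=
    filter_congr fun c hc => by
      rw [mem_sdiff, mem_cells, mem_cells] at hc
      simp only [extendStrip, if_neg hc.2, if_pos hc.1]
  rw [hin, hout, ← content]
  split_ifs with hk
  · subst hk
    have hnone : T.content k = 0 :=
      card_eq_zero.2 (filter_eq_empty_iff.2 fun c hc => (hT _ _ ((mem_cells c).1 hc)).ne)
    rw [hnone, filter_true_of_mem fun _ _ => rfl, card_sdiff_of_subset hsub, zero_add]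
  · rw [filter_false_of_mem fun _ _ => Ne.symm hk, card_empty, add_zero]

end extendStrip

theorem exists_content_eq_of_sum_le (n : ℕ) {m : ℕ → ℕ} (hm : Antitone m) (hmn : m n = 0) (hcard : μ.card = ∑ k ∈ range n, m k)
    (hdom : ∀ N, ∑ k ∈ range N, m k ≤ ∑ i ∈ range N, μ.rowLen i) :
    ∃ T : SemistandardYoungTableau μ, ∀ k, T.content k = m k := by
  induction n generalizing μ m with
  | zero =>
    have hμ : μ.cells = ∅ := card_eq_zero.1 (by simpa using hcard)
    refine ⟨highestWeight μ, fun k => ?_⟩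
    rw [content, hμ, filter_empty, card_empty]
    exact (Nat.le_zero.1 (hmn ▸ hm k.zero_le)).symm
  | succ n ih =>
    set c := m n
    set m' : ℕ → ℕ := fun k => if k < n then m k else 0
    have hc : c ≤ μ.rowLen 0 := (hm n.zero_le).trans (by simpa using hdom 1)
    have hm' : Antitone m' := fun a b hab => by
      simp only [m']
      split_ifs <;> first | exact hm hab | omega
    have hsum' : ∑ k ∈ range n, m' k = ∑ k ∈ range n, m k :=
      sum_congr rfl fun k hk => if_pos (mem_range.1 hk)
    have hcard' : (μ.removeStrip c).card = ∑ k ∈ range n, m' k := by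
      have := card_removeStrip_add hc
      rw [hcard, sum_range_succ] at this
      omega
    have hdom' (N : ℕ) : ∑ k ∈ range N, m' k ≤ ∑ i ∈ range N, (μ.removeStrip c).rowLen i :=
      le_sum_rowLen_removeStrip hc
        ((sum_le_sum fun k _ => by simp only [m']; split_ifs <;> simp).trans (hdom N))
        ((hm.sum_range_ite_lt_add_le n N).trans (hdom (N + 1)))
    obtain ⟨T, hT⟩ := ih hm' (by simp [m']) hcard' hdom'
    have hlt (i j : ℕ) : (i, j) ∈ μ.removeStrip c → T i j < n :=
      T.entry_lt_of_content_eq_zero fun k hk => by simp [hT, m', hk.not_gt]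
    refine ⟨T.extendStrip (removeStrip_le μ c) (fun _ _ => mem_removeStrip_of_succ_mem) n hlt,
      fun k => ?_⟩
    rw [content_extendStrip, hT, ← card_removeStrip_add hc, Nat.add_sub_cancel_left]
    rcases lt_trichotomy k n with hk | rfl | hk
    · simp [hk.ne, m', hk]
    · simp [c]
    · simp only [hk.ne', m', hk.not_gt, if_false]
      exact (Nat.le_zero.1 (hmn ▸ hm hk)).symm

end SemistandardYoungTableau

/-- `K_{λ,μ} > 0` iff `λ` dominates `μ` (for partitions of the same `n`). -/
theorem kostka_pos_iff_dominates (lam mu : YoungDiagram) (h : lam.card = mu.card) :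
    0 < kostka lam mu ↔
      ∀ i : ℕ, ∑ k ∈ Finset.range (i + 1), mu.rowLen k ≤
        ∑ k ∈ Finset.range (i + 1), lam.rowLen k := by
  rw [kostka, Nat.card_pos_iff]
  constructor
  · rintro ⟨⟨T, hT⟩, -⟩ i
    exact (sum_congr rfl fun k _ => (hT k).symm).trans_le (T.sum_range_content_le (i + 1))
  · intro hdom
    have hmu : mu.rowLen (mu.colLen 0) = 0 := YoungDiagram.rowLen_eq_zero_of_colLen_le le_rfl
    have hdom' : ∀ N, ∑ k ∈ range N, mu.rowLen k ≤ ∑ k ∈ range N, lam.rowLen k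
      | 0 => by simp
      | i + 1 => hdom i
    obtain ⟨T, hT⟩ := SemistandardYoungTableau.exists_content_eq_of_sum_le (mu.colLen 0)
      mu.rowLen_anti hmu (h.trans (YoungDiagram.card_eq_sum_rowLen hmu)) hdom'
    exact ⟨⟨T, hT⟩, (SemistandardYoungTableau.finite_setOf_content_eq_rowLen lam mu).to_subtype⟩
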